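/- arXiv:2206.05187 — 3 statements merged into one kernel-verified Lean document; each statement's English description precedes it below -/
import Mathlib

section
/- Let 𝒵 be a set, let ℓ : ℝ^p × 𝒵 → ℝ be such that w ↦ ℓ(w; z) is G-Lipschitz for every z ∈ 𝒵, and let r : ℝ^p → ℝ. For a dataset S = (z₁,…,z_N) ∈ 𝒵^N define R_S^r(w) = (1/N)∑_{i=1}^N ℓ(w; z_i) + r(w), and assume that for every dataset S the function R_S^r is λ-strongly convex and attains its minimum. Let ε ≥ 0 and suppose that for each dataset S, w_S ∈ ℝ^p satisfies R_S^r(w_S) ≤ min_w R_S^r(w) + ε. Then for any two datasets S, S' ∈ 𝒵^N that differ in exactly one entry, ‖w_S − w_{S'}‖ ≤ 4G/(λN) + 2√(2ε/λ). -/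
/-!
Strong convexity gives quadratic growth away from a minimizer: `f x + λ/2 ‖w - x‖² ≤ f w`.
Applied to an `ε`-minimizer this puts it within `√(2ε/λ)` of the exact minimizer. Applied to
the minimizers `x, y` of the risks of two neighbouring datasets and added up, it gives
`λ ‖x - y‖² ≤ (R_S - R_{S'})(y) - (R_S - R_{S'})(x)`; since `R_S - R_{S'}` only involves the
one replaced sample it is `2G/N`-Lipschitz, so `‖x - y‖ ≤ 2G/(λN)`. The triangle inequality
concludes.
-/

open Set Filter Topology

section StrongConvexity

variable {E : Type*} [NormedAddCommGroup E] [InnerProductSpace ℝ E]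
  {s : Set E} {m : ℝ} {f g : E → ℝ} {x y w : E}

theorem StrongConvexOn.add_sq_norm_sub_le_of_isMinOn (hf : StrongConvexOn s m f)
    (hmin : IsMinOn f s x) (hx : x ∈ s) (hw : w ∈ s) :
    f x + m / 2 * ‖w - x‖ ^ 2 ≤ f w := by
  set c := m / 2 * ‖w - x‖ ^ 2 with hc
  -- Compare `f x` with `f` on the segment `[x, w]` and let the point tend to `x`.
  have hsegment : ∀ a ∈ Ioo (0 : ℝ) 1, f x + (1 - a) * c ≤ f w := by
    rintro a ⟨ha0, ha1⟩
    have hconv := hf.2 hw hx ha0.le (by linarith) (add_sub_cancel a 1)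
    have hle : f x ≤ f (a • w + (1 - a) • x) :=
      hmin (hf.1 hw hx ha0.le (by linarith) (add_sub_cancel a 1))
    simp only [smul_eq_mul, ← hc] at hconv
    have : a * (f x + (1 - a) * c) ≤ a * f w := by linarith
    exact le_of_mul_le_mul_left this ha0
  have hlim : Tendsto (fun a : ℝ => f x + (1 - a) * c) (𝓝[>] 0) (𝓝 (f x + c)) :=
    tendsto_nhdsWithin_of_tendsto_nhds <| Continuous.tendsto' (by fun_prop) 0 _ (by simp)
  refine le_of_tendsto hlim ?_
  filter_upwards [Ioo_mem_nhdsGT one_pos] using hsegment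

theorem StrongConvexOn.norm_sub_le_sqrt_of_le_add (hf : StrongConvexOn s m f) (hm : 0 < m)
    (hmin : IsMinOn f s x) (hx : x ∈ s) (hw : w ∈ s) {ε : ℝ} (hε : f w ≤ f x + ε) :
    ‖w - x‖ ≤ √(2 * ε / m) := by
  have := hf.add_sq_norm_sub_le_of_isMinOn hmin hx hw
  refine Real.le_sqrt_of_sq_le ?_
  rw [le_div_iff₀ hm]
  linarith

theorem StrongConvexOn.norm_sub_le_of_isMinOn_of_sub_lipschitz (hf : StrongConvexOn s m f)
    (hg : StrongConvexOn s m g) (hm : 0 < m) (hfx : IsMinOn f s x) (hgy : IsMinOn g s y)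
    (hx : x ∈ s) (hy : y ∈ s) {L : ℝ} (hL : 0 ≤ L)
    (hlip : ∀ u ∈ s, ∀ v ∈ s, (f u - g u) - (f v - g v) ≤ L * ‖u - v‖) :
    ‖x - y‖ ≤ L / m := by
  have hgrowth_f := hf.add_sq_norm_sub_le_of_isMinOn hfx hx hy
  have hgrowth_g := hg.add_sq_norm_sub_le_of_isMinOn hgy hy hx
  have hsq : m * ‖x - y‖ ^ 2 ≤ L * ‖x - y‖ := by
    have := hlip y hy x hx
    rw [norm_sub_rev y x] at this hgrowth_f
    linarith
  rw [le_div_iff₀ hm]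
  rcases (norm_nonneg (x - y)).eq_or_lt with hzero | hpos
  · rw [← hzero, zero_mul]; exact hL
  · nlinarith

end StrongConvexity

theorem inexact_regularized_erm_stability_general
    {Z : Type*} (p N : ℕ) (G lam ε : ℝ)
    (hG : 0 ≤ G) (hlam : 0 < lam)
    (ℓ : EuclideanSpace ℝ (Fin p) → Z → ℝ) (r : EuclideanSpace ℝ (Fin p) → ℝ)
    (hlip : ∀ z w w', |ℓ w z - ℓ w' z| ≤ G * ‖w - w'‖)
    (Rr : (Fin N → Z) → EuclideanSpace ℝ (Fin p) → ℝ)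
    (hRr : ∀ S w, Rr S w = (N : ℝ)⁻¹ * ∑ i, ℓ w (S i) + r w)
    (hsc : ∀ S, ConvexOn ℝ Set.univ (fun w => Rr S w - (lam / 2) * ‖w‖ ^ 2))
    (hattain : ∀ S, ∃ w, IsMinOn (Rr S) Set.univ w)
    (wS : (Fin N → Z) → EuclideanSpace ℝ (Fin p))
    (hinexact : ∀ S, Rr S (wS S) ≤ (⨅ w, Rr S w) + ε)
    (S S' : Fin N → Z) (i : Fin N) (hdiff : ∀ j, j ≠ i → S j = S' j) :
    ‖wS S - wS S'‖ ≤ 4 * G / (lam * N) + 2 * Real.sqrt (2 * ε / lam) := by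
  have hstrong T : StrongConvexOn univ lam (Rr T) := strongConvexOn_iff_convex.mpr (hsc T)
  have hnear T {x} (hx : IsMinOn (Rr T) univ x) : ‖wS T - x‖ ≤ √(2 * ε / lam) :=
    (hstrong T).norm_sub_le_sqrt_of_le_add hlam hx (mem_univ _) (mem_univ _) <|
      (hinexact T).trans (by gcongr; exact ciInf_le (by simpa using hx.bddBelow) x)
  have hrisk_sub w : Rr S w - Rr S' w = (N : ℝ)⁻¹ * (ℓ w (S i) - ℓ w (S' i)) := by
    rw [hRr, hRr, add_sub_add_right_eq_sub, ← mul_sub, ← Finset.sum_sub_distrib,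
      Fintype.sum_eq_single i fun j hj => by rw [hdiff j hj, sub_self]]
  have hrisk_sub_lip u v :
      (Rr S u - Rr S' u) - (Rr S v - Rr S' v) ≤ (N : ℝ)⁻¹ * (2 * G) * ‖u - v‖ := by
    rw [hrisk_sub, hrisk_sub, ← mul_sub, mul_assoc]
    gcongr
    linarith [(abs_le.mp (hlip (S i) u v)).2, (abs_le.mp (hlip (S' i) u v)).1]
  obtain ⟨x, hx⟩ := hattain S
  obtain ⟨y, hy⟩ := hattain S'
  have hxy : ‖x - y‖ ≤ (N : ℝ)⁻¹ * (2 * G) / lam :=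
    (hstrong S).norm_sub_le_of_isMinOn_of_sub_lipschitz (hstrong S') hlam hx hy (mem_univ _)
      (mem_univ _) (by positivity) fun u _ v _ => hrisk_sub_lip u v
  have hcoeff : (N : ℝ)⁻¹ * (2 * G) / lam ≤ 4 * G / (lam * N) := by
    rw [show (N : ℝ)⁻¹ * (2 * G) / lam = 2 * G / (lam * N) by ring]
    gcongr
    linarith
  calc ‖wS S - wS S'‖
      ≤ ‖wS S - x‖ + ‖x - y‖ + ‖y - wS S'‖ := by
        linarith [norm_sub_le_norm_sub_add_norm_sub (wS S) x (wS S'),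
          norm_sub_le_norm_sub_add_norm_sub x y (wS S')]
    _ ≤ √(2 * ε / lam) + 4 * G / (lam * N) + √(2 * ε / lam) := by
      gcongr
      · exact hnear S hx
      · exact hxy.trans hcoeff
      · rw [norm_sub_rev]; exact hnear S' hy
    _ = _ := by ring

/-- Uniform argument stability of inexact regularized ERM: if each
`R_S^r(w) = (1/N)∑ᵢ ℓ(w; zᵢ) + r(w)` is `λ`-strongly convex and attains its minimum, every
loss `ℓ(·; z)` is `G`-Lipschitz, and `w_S` is an `ε`-inexact minimizer of `R_S^r` for every
dataset `S`, then datasets differing in one entry give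
`‖w_S − w_{S'}‖ ≤ 4G/(λN) + 2√(2ε/λ)`. -/
theorem inexact_regularized_erm_stability
    {Z : Type*} (p N : ℕ) (hN : 0 < N) (G lam ε : ℝ)
    (hG : 0 ≤ G) (hlam : 0 < lam) (hε : 0 ≤ ε)
    (ℓ : EuclideanSpace ℝ (Fin p) → Z → ℝ) (r : EuclideanSpace ℝ (Fin p) → ℝ)
    (hlip : ∀ z w w', |ℓ w z - ℓ w' z| ≤ G * ‖w - w'‖)
    (Rr : (Fin N → Z) → EuclideanSpace ℝ (Fin p) → ℝ)
    (hRr : ∀ S w, Rr S w = (N : ℝ)⁻¹ * ∑ i, ℓ w (S i) + r w)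
    (hsc : ∀ S, ConvexOn ℝ Set.univ (fun w => Rr S w - (lam / 2) * ‖w‖ ^ 2))
    (hattain : ∀ S, ∃ w, IsMinOn (Rr S) Set.univ w)
    (wS : (Fin N → Z) → EuclideanSpace ℝ (Fin p))
    (hinexact : ∀ S, Rr S (wS S) ≤ (⨅ w, Rr S w) + ε)
    (S S' : Fin N → Z) (i : Fin N) (hdiff : ∀ j, j ≠ i → S j = S' j) :
    ‖wS S - wS S'‖ ≤ 4 * G / (lam * N) + 2 * Real.sqrt (2 * ε / lam) :=
  inexact_regularized_erm_stability_general p N G lam ε hG hlam ℓ r hlip Rr hRr hsc hattain wS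
    hinexact S S' i hdiff
end

section
/- Let (𝒵, 𝒟) be a probability space and ℓ : ℝ^p × 𝒵 → ℝ a measurable loss such that for every z the map w ↦ ℓ(w; z) is G-Lipschitz and L-smooth. Define the population risk R(w) = E_{Z∼𝒟}[ℓ(w; Z)]. Let A : 𝒵^N → ℝ^p be a measurable algorithm with γ-uniform argument stability. Then, for S an i.i.d. sample of size N from 𝒟, E_S[‖∇R(A(S)) − E_S[∇R(A(S))]‖²] ≤ L²·γ²·N. -/
/-!
Differentiating under the integral sign gives `∇R w = E_Z ∇ℓ(w; Z)`, so `∇R` is bounded by `G`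
and `L`-Lipschitz; uniform argument stability then gives `S ↦ ∇R (A S)` bounded differences
`L γ`. The bound is the Efron–Stein inequality `E ‖f - E f‖² ≤ N c²` for Hilbert-space-valued
functions of `N` independent variables with bounded differences `c`, proved by induction on `N`:
conditioning on the first variable splits the variance (law of total variance) into a term at
most `c²` and the variance of a function of `N - 1` variables with the same bounded differences.
-/

open MeasureTheory

section Gradient

variable {Z E : Type*} [MeasurableSpace Z] [NormedAddCommGroup E]

lemma measurable_fderiv_apply [NormedSpace ℝ E] {f : E → Z → ℝ}
    (hf : ∀ w, Measurable (f w)) {w : E} (hd : ∀ z, DifferentiableAt ℝ (f · z) w) (v : E) :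
    Measurable fun z => fderiv ℝ (f · z) w v := by
  refine measurable_of_tendsto_metrizable
    (f := fun (n : ℕ) z => (n : ℝ) • (f (w + (n : ℝ)⁻¹ • v) z - f w z))
    (fun n => (((hf _).sub (hf w)).const_smul (n : ℝ) :)) (tendsto_pi_nhds.mpr fun z => ?_)
  exact ((hd z).hasFDerivAt.lim_real v).comp tendsto_natCast_atTop_atTop

variable [InnerProductSpace ℝ E] [FiniteDimensional ℝ E]

lemma stronglyMeasurable_gradient {f : E → Z → ℝ} (hf : ∀ w, Measurable (f w))
    {w : E} (hd : ∀ z, DifferentiableAt ℝ (f · z) w) :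
    StronglyMeasurable fun z => gradient (f · z) w := by
  let b := stdOrthonormalBasis ℝ E
  have h_expand : (fun z => gradient (f · z) w)
      = fun z => ∑ i, fderiv ℝ (f · z) w (b i) • b i := by
    funext z
    conv_lhs => rw [← b.sum_repr' (gradient (f · z) w)]
    refine Finset.sum_congr rfl fun i _ => ?_
    rw [real_inner_comm, gradient, InnerProductSpace.toDual_symm_apply]
  rw [h_expand]
  exact Finset.stronglyMeasurable_fun_sum _ fun i _ =>
    (measurable_fderiv_apply hf hd (b i)).stronglyMeasurable.smul_const _

lemma norm_gradient_le_of_lipschitz {f : E → ℝ} {K : NNReal} (hf : LipschitzWith K f) (w : E) :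
    ‖gradient f w‖ ≤ K := by
  rw [gradient, LinearIsometryEquiv.norm_map]
  exact norm_fderiv_le_of_lipschitz ℝ hf

variable {μ : Measure Z} [IsFiniteMeasure μ] {ℓ : E → Z → ℝ} {K : NNReal}

lemma integrable_gradient_of_lipschitz (hℓ : ∀ w, Measurable (ℓ w)) {w : E}
    (hd : ∀ z, DifferentiableAt ℝ (ℓ · z) w) (hlip : ∀ z, LipschitzWith K (ℓ · z)) :
    Integrable (fun z => gradient (ℓ · z) w) μ :=
  (integrable_const (K : ℝ)).mono' (stronglyMeasurable_gradient hℓ hd).aestronglyMeasurable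
    (.of_forall fun z => norm_gradient_le_of_lipschitz (hlip z) w)

lemma hasGradientAt_integral_of_lipschitz (hℓ : ∀ w, Measurable (ℓ w))
    (hint : ∀ w, Integrable (ℓ w) μ) {w : E} (hd : ∀ z, DifferentiableAt ℝ (ℓ · z) w)
    (hlip : ∀ z, LipschitzWith K (ℓ · z)) :
    HasGradientAt (fun w => ∫ z, ℓ w z ∂μ) (∫ z, gradient (ℓ · z) w ∂μ) w := by
  have h_fderiv : ∀ z, fderiv ℝ (ℓ · z) w = InnerProductSpace.toDual ℝ E (gradient (ℓ · z) w) :=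
    fun z => ((InnerProductSpace.toDual ℝ E).apply_symm_apply _).symm
  have h_comm : ∫ z, fderiv ℝ (ℓ · z) w ∂μ
      = InnerProductSpace.toDual ℝ E (∫ z, gradient (ℓ · z) w ∂μ) := by
    simp_rw [h_fderiv]
    exact (InnerProductSpace.toDual ℝ E).toLinearIsometry.integral_comp_comm _
  have h_meas : AEStronglyMeasurable (fun z => fderiv ℝ (ℓ · z) w) μ := by
    simp_rw [h_fderiv]
    exact ((InnerProductSpace.toDual ℝ E).continuous.comp_stronglyMeasurable
      (stronglyMeasurable_gradient hℓ hd)).aestronglyMeasurable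
  rw [hasGradientAt_iff_hasFDerivAt, ← h_comm]
  exact (hasFDerivAt_integral_of_dominated_loc_of_lip (bound := fun _ => (K : ℝ))
    Filter.univ_mem (.of_forall fun w => (hℓ w).aestronglyMeasurable) (hint w) h_meas
    (.of_forall fun z => by simpa using hlip z) (integrable_const _)
    (.of_forall fun z => (hd z).hasFDerivAt)).2

end Gradient

section Variance

variable {X H : Type*} [MeasurableSpace X] {μ : Measure X} [IsProbabilityMeasure μ]
  [NormedAddCommGroup H]

lemma norm_integral_le_of_forall_norm_le [NormedSpace ℝ H] {f : X → H} {C : ℝ}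
    (h : ∀ x, ‖f x‖ ≤ C) : ‖∫ x, f x ∂μ‖ ≤ C := by
  simpa using norm_integral_le_of_norm_le_const (μ := μ) (.of_forall h)

lemma norm_integral_sub_integral_le [NormedSpace ℝ H] {f g : X → H} {c : ℝ}
    (hf : Integrable f μ) (hg : Integrable g μ) (h : ∀ x, ‖f x - g x‖ ≤ c) :
    ‖∫ x, f x ∂μ - ∫ x, g x ∂μ‖ ≤ c := by
  rw [← integral_sub hf hg]
  exact norm_integral_le_of_forall_norm_le h

variable [InnerProductSpace ℝ H] [CompleteSpace H]

lemma integral_norm_sub_sq_eq {f : X → H} (hf : MemLp f 2 μ) (m : H) :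
    ∫ x, ‖f x - m‖ ^ 2 ∂μ
      = ∫ x, ‖f x - ∫ x', f x' ∂μ‖ ^ 2 ∂μ + ‖∫ x, f x ∂μ - m‖ ^ 2 := by
  set a := ∫ x, f x ∂μ
  have h_split : ∀ x, ‖f x - m‖ ^ 2
      = ‖f x - a‖ ^ 2 + 2 * inner ℝ (a - m) (f x - a) + ‖a - m‖ ^ 2 := fun x => by
    rw [real_inner_comm, ← norm_add_sq_real, sub_add_sub_cancel]
  have h_int : Integrable (fun x => f x - a) μ :=
    (hf.integrable one_le_two).sub (integrable_const a)
  have h_center : ∫ x, (f x - a) ∂μ = 0 := by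
    rw [integral_sub (hf.integrable one_le_two) (integrable_const a)]
    simp [a]
  have h_sq : Integrable (fun x => ‖f x - a‖ ^ 2) μ :=
    (hf.sub (memLp_const a)).integrable_norm_pow'
  have h_cross : Integrable (fun x => 2 * inner ℝ (a - m) (f x - a)) μ :=
    (h_int.const_inner (a - m)).const_mul 2
  simp_rw [h_split]
  rw [integral_add (h_sq.fun_add h_cross) (integrable_const _), integral_add h_sq h_cross,
    integral_const_mul, integral_inner h_int, h_center]
  simp

lemma integral_prod_norm_sub_sq_eq {Y : Type*} [MeasurableSpace Y] {ν : Measure Y}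
    [IsFiniteMeasure ν] {g : X × Y → H} (hg : StronglyMeasurable g) {C : ℝ}
    (hC : ∀ y, ‖g y‖ ≤ C) (m : H) :
    ∫ y, ‖g y - m‖ ^ 2 ∂(μ.prod ν)
      = ∫ y, ‖g y - ∫ x, g (x, y.2) ∂μ‖ ^ 2 ∂(μ.prod ν)
        + ∫ y, ‖∫ x, g (x, y) ∂μ - m‖ ^ 2 ∂ν := by
  set h : Y → H := fun y => ∫ x, g (x, y) ∂μ
  have hh : StronglyMeasurable h := hg.integral_prod_left'
  have hhC : ∀ y, ‖h y‖ ≤ C := fun y => norm_integral_le_of_forall_norm_le fun x => hC _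
  have hg2 : MemLp g 2 (μ.prod ν) := .of_bound hg.aestronglyMeasurable C (.of_forall hC)
  have hh2 : MemLp (fun y : X × Y => h y.2) 2 (μ.prod ν) :=
    .of_bound (hh.comp_measurable measurable_snd).aestronglyMeasurable C
      (.of_forall fun y => hhC y.2)
  have h_fiber : ∀ y, MemLp (fun x => g (x, y)) 2 μ := fun y =>
    .of_bound (hg.comp_measurable measurable_prodMk_right).aestronglyMeasurable C
      (.of_forall fun x => hC _)
  have h_within : Integrable (fun y => ‖g y - h y.2‖ ^ 2) (μ.prod ν) :=
    (hg2.sub hh2).integrable_norm_pow'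
  have h_between : Integrable (fun y => ‖h y - m‖ ^ 2) ν :=
    ((MemLp.of_bound hh.aestronglyMeasurable C (.of_forall hhC)).sub
      (memLp_const m)).integrable_norm_pow'
  have h_total : Integrable (fun y => ‖g y - m‖ ^ 2) (μ.prod ν) :=
    (hg2.sub (memLp_const m)).integrable_norm_pow'
  rw [integral_prod_symm _ h_total,
    integral_prod_symm _ h_within, ← integral_add h_within.integral_prod_right h_between]
  exact integral_congr_ae (.of_forall fun y => integral_norm_sub_sq_eq (h_fiber y) m)

end Variance

lemma measurable_fin_cons {Z : Type*} [MeasurableSpace Z] {n : ℕ} :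
    Measurable fun y : Z × (Fin n → Z) => (Fin.cons y.1 y.2 : Fin (n + 1) → Z) :=
  measurable_pi_iff.2 fun j => Fin.cases measurable_fst
    (fun k => (measurable_pi_apply k).comp measurable_snd) j

lemma integral_pi_fin_succ_eq_integral_prod {Z E : Type*} [MeasurableSpace Z]
    [NormedAddCommGroup E] [NormedSpace ℝ E] (μ : Measure Z) [SigmaFinite μ] {n : ℕ}
    (u : (Fin (n + 1) → Z) → E) :
    ∫ s, u s ∂(Measure.pi fun _ => μ)
      = ∫ y, u (Fin.cons y.1 y.2) ∂(μ.prod (Measure.pi fun _ : Fin n => μ)) := by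
  rw [← ((measurePreserving_piFinSuccAbove (fun _ => μ) 0).symm _).integral_comp' u]
  simp [Fin.consEquiv]

def BoundedDifferences {ι Z E : Type*} [NormedAddCommGroup E] (f : (ι → Z) → E) (c : ℝ) :
    Prop :=
  ∀ s s' i, (∀ j, j ≠ i → s j = s' j) → ‖f s - f s'‖ ≤ c

namespace BoundedDifferences

variable {ι Z E : Type*} [NormedAddCommGroup E] {c : ℝ}

lemma comp_of_norm_sub_le {F : Type*} [NormedAddCommGroup F] {f : (ι → Z) → E}
    (hf : BoundedDifferences f c) {φ : E → F} {L : ℝ}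
    (hφ : ∀ x y, ‖φ x - φ y‖ ≤ L * ‖x - y‖) : BoundedDifferences (φ ∘ f) (|L| * c) :=
  fun s s' i hss' =>
  calc ‖φ (f s) - φ (f s')‖ ≤ L * ‖f s - f s'‖ := hφ _ _
    _ ≤ |L| * ‖f s - f s'‖ := mul_le_mul_of_nonneg_right (le_abs_self L) (norm_nonneg _)
    _ ≤ |L| * c := mul_le_mul_of_nonneg_left (hf s s' i hss') (abs_nonneg L)

lemma integral [NormedSpace ℝ E] {X : Type*} [MeasurableSpace X] {μ : Measure X}
    [IsProbabilityMeasure μ] {g : X → (ι → Z) → E} (hg : ∀ x, BoundedDifferences (g x) c)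
    (hint : ∀ s, Integrable (fun x => g x s) μ) :
    BoundedDifferences (fun s => ∫ x, g x s ∂μ) c :=
  fun s s' i hss' => norm_integral_sub_integral_le (hint s) (hint s') fun x => hg x s s' i hss'

variable {n : ℕ} {f : (Fin (n + 1) → Z) → E}

lemma norm_sub_cons_le (hf : BoundedDifferences f c) (z z' : Z) (s : Fin n → Z) :
    ‖f (Fin.cons z s) - f (Fin.cons z' s)‖ ≤ c :=
  hf _ _ 0 fun j hj => by
    obtain ⟨k, rfl⟩ := Fin.exists_succ_eq.mpr hj
    simp

lemma cons (hf : BoundedDifferences f c) (z : Z) :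
    BoundedDifferences (fun s : Fin n → Z => f (Fin.cons z s)) c :=
  fun s s' i hss' => hf _ _ i.succ fun j hj => by
    cases j using Fin.cases with
    | zero => simp
    | succ k => simpa using hss' k fun hk => hj (hk ▸ rfl)

end BoundedDifferences

theorem integral_norm_sub_integral_sq_le_of_boundedDifferences {Z H : Type*}
    [MeasurableSpace Z] [NormedAddCommGroup H] [InnerProductSpace ℝ H] [CompleteSpace H]
    (μ : Measure Z) [IsProbabilityMeasure μ] {n : ℕ} {f : (Fin n → Z) → H}
    (hf : StronglyMeasurable f) {C c : ℝ} (hC : ∀ s, ‖f s‖ ≤ C) (hc : BoundedDifferences f c) :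
    ∫ s, ‖f s - ∫ s', f s' ∂(Measure.pi fun _ => μ)‖ ^ 2 ∂(Measure.pi fun _ => μ)
      ≤ n * c ^ 2 := by
  induction n with
  | zero =>
    have h_const : ∀ s, f s - ∫ s', f s' ∂(Measure.pi fun _ => μ) = 0 := fun s => by
      rw [integral_eq_const (.of_forall fun s' => congrArg f (Subsingleton.elim s' s)), sub_self]
    simp [h_const]
  | succ n ih =>
    set g : Z × (Fin n → Z) → H := fun y => f (Fin.cons y.1 y.2)
    set h : (Fin n → Z) → H := fun s => ∫ z, g (z, s) ∂μ
    have hg : StronglyMeasurable g := hf.comp_measurable measurable_fin_cons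
    have hg_int : ∀ s, Integrable (fun z => g (z, s)) μ := fun s =>
      (integrable_const C).mono'
        (hg.comp_measurable measurable_prodMk_right).aestronglyMeasurable
        (.of_forall fun z => hC _)
    have h_within : ∫ y, ‖g y - h y.2‖ ^ 2 ∂(μ.prod (Measure.pi fun _ => μ)) ≤ c ^ 2 := by
      have h_pointwise : ∀ y, ‖g y - h y.2‖ ≤ c := fun y => by
        simpa using norm_integral_sub_integral_le (integrable_const (g y)) (hg_int y.2)
          fun z => hc.norm_sub_cons_le y.1 z y.2
      calc _ ≤ ∫ _, c ^ 2 ∂(μ.prod (Measure.pi fun _ => μ)) :=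
            integral_mono_of_nonneg (.of_forall fun _ => by positivity) (integrable_const _)
              (.of_forall fun y => pow_le_pow_left₀ (norm_nonneg _) (h_pointwise y) 2)
        _ = c ^ 2 := by simp
    have h_between := ih hg.integral_prod_left'
      (fun s => norm_integral_le_of_forall_norm_le fun z => hC _)
      (BoundedDifferences.integral (fun z => hc.cons z) hg_int)
    have h_mean : ∫ y, g y ∂(μ.prod (Measure.pi fun _ => μ))
        = ∫ s, h s ∂(Measure.pi fun _ => μ) :=
      integral_prod_symm g
        ((integrable_const C).mono' hg.aestronglyMeasurable (.of_forall fun y => hC _))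
    rw [integral_pi_fin_succ_eq_integral_prod μ f,
      integral_pi_fin_succ_eq_integral_prod μ (fun s => ‖f s - _‖ ^ 2), h_mean,
      integral_prod_norm_sub_sq_eq hg (fun y => hC _)]
    push_cast
    linarith

/-- Gradient concentration via uniform argument stability (second moment):
for a `G`-Lipschitz, `L`-smooth loss and a `γ`-uniformly argument stable algorithm `A`,
`E_S‖∇R(A(S)) − E_S[∇R(A(S))]‖² ≤ L²γ²N`, where `S ∼ 𝒟^N`. -/
theorem stability_gradient_generalization_second_moment
    {Z : Type*} [MeasurableSpace Z] (p N : ℕ)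
    (μ : Measure Z) [IsProbabilityMeasure μ]
    (G L γ : ℝ)
    (ℓ : EuclideanSpace ℝ (Fin p) → Z → ℝ)
    (hmeas : Measurable (Function.uncurry ℓ))
    (hlip : ∀ z w w', |ℓ w z - ℓ w' z| ≤ G * ‖w - w'‖)
    (hdiff : ∀ z, Differentiable ℝ (fun w => ℓ w z))
    (hsmooth : ∀ z w w',
      ‖gradient (fun w => ℓ w z) w - gradient (fun w => ℓ w z) w'‖ ≤ L * ‖w - w'‖)
    (hint : ∀ w, Integrable (fun z => ℓ w z) μ)
    (R : EuclideanSpace ℝ (Fin p) → ℝ) (hR : ∀ w, R w = ∫ z, ℓ w z ∂μ)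
    (A : (Fin N → Z) → EuclideanSpace ℝ (Fin p)) (hA : Measurable A)
    (hstab : ∀ (S S' : Fin N → Z) (i : Fin N),
      (∀ j, j ≠ i → S j = S' j) → ‖A S - A S'‖ ≤ γ) :
    ∫ s, ‖gradient R (A s)
        - ∫ s', gradient R (A s') ∂(Measure.pi fun _ : Fin N => μ)‖ ^ 2
        ∂(Measure.pi fun _ : Fin N => μ)
      ≤ L ^ 2 * γ ^ 2 * N := by
  have hℓ : ∀ w, Measurable (ℓ w) := fun w => hmeas.comp measurable_prodMk_left
  have hℓ_lip : ∀ z, LipschitzWith G.toNNReal (ℓ · z) := fun z =>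
    LipschitzWith.of_dist_le' fun w w' => by
      simpa only [dist_eq_norm, Real.norm_eq_abs] using hlip z w w'
  have h_grad : ∀ w, gradient R w = ∫ z, gradient (ℓ · z) w ∂μ := fun w => by
    rw [show R = fun w => ∫ z, ℓ w z ∂μ from funext hR]
    exact (hasGradientAt_integral_of_lipschitz hℓ hint (fun z => hdiff z w) hℓ_lip).gradient
  have h_smooth : ∀ w w', ‖gradient R w - gradient R w'‖ ≤ L * ‖w - w'‖ := fun w w' => by
    rw [h_grad, h_grad]
    exact norm_integral_sub_integral_le
      (integrable_gradient_of_lipschitz hℓ (fun z => hdiff z w) hℓ_lip)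
      (integrable_gradient_of_lipschitz hℓ (fun z => hdiff z w') hℓ_lip) (hsmooth · w w')
  have h_bdd : ∀ w, ‖gradient R w‖ ≤ G.toNNReal := fun w => by
    rw [h_grad]
    exact norm_integral_le_of_forall_norm_le fun z =>
      norm_gradient_le_of_lipschitz (hℓ_lip z) w
  have h_meas : StronglyMeasurable (gradient R ∘ A) :=
    ((LipschitzWith.of_dist_le' (by simpa only [dist_eq_norm] using h_smooth)).continuous
      |>.measurable.comp hA).stronglyMeasurable
  calc _ ≤ N * (|L| * γ) ^ 2 :=
        integral_norm_sub_integral_sq_le_of_boundedDifferences μ h_meas (fun s => h_bdd (A s))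
          (BoundedDifferences.comp_of_norm_sub_le hstab h_smooth)
    _ = L ^ 2 * γ ^ 2 * N := by rw [mul_pow, sq_abs]; ring
end

section
/- Let R^(1),…,R^(M) : ℝ^p → ℝ each be G-Lipschitz and ν-weakly convex, and let R̄ = (1/M)∑_{m=1}^M R^(m). Fix ρ and η with 0 < η ≤ ρ < 1/(2ν). Fix w ∈ ℝ^p; for each m let w^(m) be the (unique) minimizer of u ↦ R^(m)(u) + ‖u − w‖²/(2η), let S be a uniformly random subset of {1,…,M} of cardinality I, set w⁺ = (1/I)∑_{ξ∈S} w^(ξ), and let ŵ = prox_{ρR̄}(w). Then E[R̄_ρ(w⁺)] ≤ R̄_ρ(w) − (((1/ρ − ν)/ρ)/(1/η + 1/ρ − 2ν))·‖ŵ − w‖² + (2G²η/ρ)/(1/η + 1/ρ − 2ν), where R̄_ρ is the ρ-Moreau envelope of R̄. -/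
/-!
Adding `‖· - w‖² / (2η)` to a `ν`-weakly convex function makes it `(1/η - ν)`-strongly convex,
so each exact prox point has quadratic growth around it. Applied to the local problems at `ŵ`
and combined with the Lipschitz bound, this bounds `A = (1/M) ∑ ‖w^(m) - ŵ‖²` by
`R̄(ŵ) - R̄(w)` plus terms in `‖ŵ - w‖²` and `G²η`; applied to the global problem at `w`, it
bounds `R̄(ŵ) - R̄(w)` by `-(1/ρ + (1/ρ - ν)) ‖ŵ - w‖² / 2`. On the other side, testing the
Moreau envelope at `ŵ`, Jensen's inequality for `‖· - ŵ‖²` and the fact that every index lies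
in the same number of size-`I` subsets give `E[R̄_ρ(w⁺)] ≤ R̄(ŵ) + A / (2ρ)`. Eliminating `A`
and `R̄(ŵ) - R̄(w)` leaves the claim.
-/

open Finset Filter Topology

theorem mul_le_sq_div_add (G t : ℝ) {η : ℝ} (hη : 0 < η) :
    G * t ≤ t ^ 2 / (2 * η) + G ^ 2 * η / 2 := by
  rw [div_add' _ _ _ (by positivity), le_div_iff₀ (by positivity)]
  nlinarith [sq_nonneg (t - G * η)]

theorem two_mul_lt_one_div_of_lt_one_div {ν ρ : ℝ} (hρ0 : 0 < ρ) (hρ : ρ < 1 / (2 * ν)) :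
    2 * ν < 1 / ρ := by
  rcases le_or_gt ν 0 with hν | hν
  · linarith [one_div_pos.mpr hρ0]
  · rw [lt_div_iff₀ (by positivity)] at hρ
    rw [lt_div_iff₀ hρ0]
    linarith

section SubsetAverages

variable {α : Type*} [Fintype α] {I : ℕ}

theorem Finset.sum_powersetCard_sum {β : Type*} [AddCommMonoid β] (hI : 1 ≤ I) (a : α → β) :
    ∑ s ∈ (univ : Finset α).powersetCard I, ∑ i ∈ s, a i
      = (Fintype.card α - 1).choose (I - 1) • ∑ i, a i := by
  classical
  rw [sum_comm' (t' := univ) (s' := fun i => (univ.powersetCard I).filter (i ∈ ·))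
    (by simp), smul_sum]
  refine sum_congr rfl fun i _ => ?_
  have hcount := card_filter_powersetCard_subset {i} univ I (subset_univ _) (by simpa using hI)
  simp only [singleton_subset_iff, card_singleton, card_univ] at hcount
  rw [sum_const, hcount]

theorem Finset.average_powersetCard_average (hI : 1 ≤ I) (hIα : I ≤ Fintype.card α)
    (a : α → ℝ) :
    (#((univ : Finset α).powersetCard I) : ℝ)⁻¹ *
        ∑ s ∈ (univ : Finset α).powersetCard I, (I : ℝ)⁻¹ * ∑ i ∈ s, a i
      = (Fintype.card α : ℝ)⁻¹ * ∑ i, a i := by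
  have hchoose : Fintype.card α * (Fintype.card α - 1).choose (I - 1)
      = (Fintype.card α).choose I * I := by
    simpa [Nat.sub_add_cancel hI, Nat.sub_add_cancel (hI.trans hIα)]
      using Nat.add_one_mul_choose_eq (Fintype.card α - 1) (I - 1)
  have hchoose' : (Fintype.card α : ℝ) * ((Fintype.card α - 1).choose (I - 1) : ℕ)
      = (Fintype.card α).choose I * I := by exact_mod_cast hchoose
  have hI0 : (I : ℝ) ≠ 0 := by positivity
  have hC0 : ((Fintype.card α).choose I : ℝ) ≠ 0 := by
    exact_mod_cast (Nat.choose_pos hIα).ne'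
  have hα0 : (Fintype.card α : ℝ) ≠ 0 := by
    exact_mod_cast Nat.one_le_iff_ne_zero.mp (hI.trans hIα)
  rw [← mul_sum, sum_powersetCard_sum hI, nsmul_eq_mul, card_powersetCard, card_univ]
  field_simp
  linear_combination (∑ i, a i) * hchoose'

theorem ConvexOn.average_powersetCard_le {E : Type*} [AddCommGroup E] [Module ℝ E]
    {φ : E → ℝ} (hφ : ConvexOn ℝ Set.univ φ) (hI : 1 ≤ I) (hIα : I ≤ Fintype.card α)
    (v : α → E) :
    (#((univ : Finset α).powersetCard I) : ℝ)⁻¹ *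
        ∑ s ∈ (univ : Finset α).powersetCard I, φ ((I : ℝ)⁻¹ • ∑ i ∈ s, v i)
      ≤ (Fintype.card α : ℝ)⁻¹ * ∑ i, φ (v i) := by
  rw [← average_powersetCard_average hI hIα]
  gcongr with s hs
  have hcard : #s = I := (mem_powersetCard.mp hs).2
  have hI0 : (I : ℝ) ≠ 0 := by positivity
  simpa [smul_sum, mul_sum] using hφ.map_sum_le (t := s) (w := fun _ => (I : ℝ)⁻¹)
    (fun _ _ => by positivity) (by simp [hcard, hI0]) (fun _ _ => Set.mem_univ _)

end SubsetAverages

theorem ConvexOn.sum {E ι : Type*} [AddCommGroup E] [Module ℝ E] {s : Set E}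
    (hs : Convex ℝ s) {t : Finset ι} {f : ι → E → ℝ} (hf : ∀ i ∈ t, ConvexOn ℝ s (f i)) :
    ConvexOn ℝ s fun x => ∑ i ∈ t, f i x := by
  induction t using Finset.cons_induction with
  | empty => simpa using convexOn_const (0 : ℝ) hs
  | cons i t hi ih =>
    simp only [sum_cons]
    exact (hf i (mem_cons_self i t)).add (ih fun j hj => hf j (mem_cons_of_mem hj))

section ConvexMinimizers

variable {F : Type*} [SeminormedAddCommGroup F] [NormedSpace ℝ F]

theorem convexOn_average_add_sq_norm {ι : Type*} [Fintype ι] [Nonempty ι] {ν : ℝ}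
    {f : ι → F → ℝ} (hf : ∀ i, ConvexOn ℝ Set.univ fun u => f i u + ν / 2 * ‖u‖ ^ 2) :
    ConvexOn ℝ Set.univ fun u => (Fintype.card ι : ℝ)⁻¹ * ∑ i, f i u + ν / 2 * ‖u‖ ^ 2 := by
  refine ((ConvexOn.sum (t := univ) (f := fun i u => f i u + ν / 2 * ‖u‖ ^ 2) convex_univ
    fun i _ => hf i).smul (inv_nonneg.mpr (Nat.cast_nonneg (Fintype.card ι)))).congr
    fun u _ => ?_
  simp only [smul_eq_mul, sum_add_distrib, sum_const, card_univ, nsmul_eq_mul]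
  field_simp

theorem ConvexOn.isMinOn_of_isMinOn_add_sq_norm_sub {g : F → ℝ} (hg : ConvexOn ℝ Set.univ g)
    {c : ℝ} {x : F} (hx : IsMinOn (fun u => g u + c * ‖u - x‖ ^ 2) Set.univ x) :
    IsMinOn g Set.univ x := by
  refine isMinOn_univ_iff.mpr fun u => ?_
  -- along the segment from `x` to `u` the penalty is `O(t²)`, convexity gains `t (g x - g u)`
  have hstep : ∀ t ∈ Set.Ioc (0 : ℝ) 1, g x ≤ g u + t * (c * ‖u - x‖ ^ 2) := by
    rintro t ⟨ht0, ht1⟩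
    have hmin := isMinOn_univ_iff.mp hx ((1 - t) • x + t • u)
    have hconv := hg.2 (Set.mem_univ x) (Set.mem_univ u) (sub_nonneg.mpr ht1) ht0.le
      (sub_add_cancel 1 t)
    have hdist : (1 - t) • x + t • u - x = t • (u - x) := by module
    rw [hdist, norm_smul, Real.norm_of_nonneg ht0.le, sub_self, norm_zero] at hmin
    simp only [smul_eq_mul] at hconv
    have hscaled : t * g x ≤ t * (g u + t * (c * ‖u - x‖ ^ 2)) := by linarith
    exact le_of_mul_le_mul_left hscaled ht0
  have hlim : Tendsto (fun t => g u + t * (c * ‖u - x‖ ^ 2)) (𝓝[>] 0) (𝓝 (g u)) := by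
    have hcont : Continuous fun t : ℝ => g u + t * (c * ‖u - x‖ ^ 2) := by fun_prop
    simpa using (hcont.tendsto 0).mono_left nhdsWithin_le_nhds
  exact ge_of_tendsto hlim (eventually_of_mem (Ioc_mem_nhdsGT zero_lt_one) hstep)

end ConvexMinimizers

section MoreauEnvelope

variable {F : Type*} [SeminormedAddCommGroup F]

noncomputable def moreauEnvelope (f : F → ℝ) (ρ : ℝ) (x : F) : ℝ :=
  ⨅ v, f v + ‖v - x‖ ^ 2 / (2 * ρ)

theorem moreauEnvelope_le {f : F → ℝ} {G ρ : ℝ} (hf : ∀ u v, f u - f v ≤ G * ‖u - v‖)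
    (hρ : 0 < ρ) (x v : F) : moreauEnvelope f ρ x ≤ f v + ‖v - x‖ ^ 2 / (2 * ρ) := by
  refine ciInf_le ⟨f x - G ^ 2 * ρ / 2, ?_⟩ v
  rintro _ ⟨u, rfl⟩
  have hlip := hf x u
  rw [norm_sub_rev] at hlip
  linarith [mul_le_sq_div_add G ‖u - x‖ hρ]

theorem IsMinOn.moreauEnvelope_eq {f : F → ℝ} {ρ : ℝ} {x y : F}
    (h : IsMinOn (fun v => f v + ‖v - x‖ ^ 2 / (2 * ρ)) Set.univ y) :
    moreauEnvelope f ρ x = f y + ‖y - x‖ ^ 2 / (2 * ρ) :=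
  le_antisymm (ciInf_le ⟨_, Set.forall_mem_range.mpr (isMinOn_univ_iff.mp h)⟩ y)
    (le_ciInf (isMinOn_univ_iff.mp h))

theorem average_sub_average_le {ι : Type*} [Fintype ι] [Nonempty ι] {f : ι → F → ℝ} {G : ℝ}
    (hf : ∀ i u v, f i u - f i v ≤ G * ‖u - v‖) (u v : F) :
    (Fintype.card ι : ℝ)⁻¹ * ∑ i, f i u - (Fintype.card ι : ℝ)⁻¹ * ∑ i, f i v
      ≤ G * ‖u - v‖ := by
  rw [← mul_sub, ← sum_sub_distrib]
  calc (Fintype.card ι : ℝ)⁻¹ * ∑ i, (f i u - f i v)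
      ≤ (Fintype.card ι : ℝ)⁻¹ * ∑ _i : ι, G * ‖u - v‖ := by
        gcongr with i
        exact hf i u v
    _ = G * ‖u - v‖ := by
        rw [sum_const, card_univ, nsmul_eq_mul]
        field_simp

theorem average_powersetCard_moreauEnvelope_le [NormedSpace ℝ F] {α : Type*} [Fintype α]
    {I : ℕ} {f : F → ℝ} {G ρ : ℝ} (hf : ∀ u v, f u - f v ≤ G * ‖u - v‖)
    (hρ : 0 < ρ) (hI : 1 ≤ I) (hIα : I ≤ Fintype.card α) (y : F) (v : α → F) :
    (#((univ : Finset α).powersetCard I) : ℝ)⁻¹ *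
        ∑ s ∈ (univ : Finset α).powersetCard I, moreauEnvelope f ρ ((I : ℝ)⁻¹ • ∑ i ∈ s, v i)
      ≤ f y + (Fintype.card α : ℝ)⁻¹ * (∑ i, ‖v i - y‖ ^ 2) / (2 * ρ) := by
  have hφ : ConvexOn ℝ Set.univ fun z => f y + ‖z - y‖ ^ 2 / (2 * ρ) := by
    refine ((((convexOn_dist y convex_univ).pow (fun _ _ => dist_nonneg) 2).smul
      (inv_nonneg.mpr (by positivity : (0 : ℝ) ≤ 2 * ρ))).add_const (f y)).congr
      fun z _ => ?_
    simp only [Pi.add_apply, Pi.pow_apply, smul_eq_mul, dist_eq_norm]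
    ring
  have hα : (Fintype.card α : ℝ) ≠ 0 := by
    exact_mod_cast Nat.one_le_iff_ne_zero.mp (hI.trans hIα)
  calc _ ≤ (#((univ : Finset α).powersetCard I) : ℝ)⁻¹ *
          ∑ s ∈ (univ : Finset α).powersetCard I,
            (f y + ‖(I : ℝ)⁻¹ • ∑ i ∈ s, v i - y‖ ^ 2 / (2 * ρ)) := by
        gcongr with s
        rw [norm_sub_rev]
        exact moreauEnvelope_le hf hρ _ y
    _ ≤ (Fintype.card α : ℝ)⁻¹ * ∑ i, (f y + ‖v i - y‖ ^ 2 / (2 * ρ)) :=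
        hφ.average_powersetCard_le hI hIα v
    _ = _ := by
        rw [sum_add_distrib, sum_const, card_univ, nsmul_eq_mul, ← sum_div]
        field_simp

end MoreauEnvelope

section ProxGrowth

variable {E : Type*} [NormedAddCommGroup E] [InnerProductSpace ℝ E]

theorem IsMinOn.add_sq_norm_sub_le_of_convexOn {f : E → ℝ} {ν ρ : ℝ} {w x : E}
    (hf : ConvexOn ℝ Set.univ fun u => f u + ν / 2 * ‖u‖ ^ 2)
    (hx : IsMinOn (fun u => f u + ‖u - w‖ ^ 2 / (2 * ρ)) Set.univ x) (u : E) :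
    f x + ‖x - w‖ ^ 2 / (2 * ρ) + (1 / ρ - ν) / 2 * ‖u - x‖ ^ 2
      ≤ f u + ‖u - w‖ ^ 2 / (2 * ρ) := by
  set g : E → ℝ := fun u => f u + ‖u - w‖ ^ 2 / (2 * ρ) - (1 / ρ - ν) / 2 * ‖u - x‖ ^ 2
  -- `g` differs from `f + ν/2 ‖·‖²` by an affine function
  have hg : ConvexOn ℝ Set.univ g := by
    refine (hf.add (((innerSL ℝ ((1 / ρ - ν) • x - ρ⁻¹ • w)).toLinearMap.convexOn
      convex_univ).add_const (‖w‖ ^ 2 / (2 * ρ) - (1 / ρ - ν) / 2 * ‖x‖ ^ 2))).congr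
      fun u _ => ?_
    simp only [g, Pi.add_apply, ContinuousLinearMap.coe_coe, innerSL_apply_apply,
      norm_sub_sq_real, real_inner_comm u, inner_sub_right, real_inner_smul_right]
    ring
  have hmin := isMinOn_univ_iff.mp (hg.isMinOn_of_isMinOn_add_sq_norm_sub
    (c := (1 / ρ - ν) / 2) (x := x) (by simpa only [g, sub_add_cancel] using hx)) u
  simp only [g, sub_self, norm_zero] at hmin
  linarith

theorem IsMinOn.sq_norm_sub_le_of_convexOn_of_lipschitz {f : E → ℝ} {G ν η : ℝ} {w x : E}
    (hf : ConvexOn ℝ Set.univ fun u => f u + ν / 2 * ‖u‖ ^ 2)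
    (hlip : ∀ u v, f u - f v ≤ G * ‖u - v‖) (hη : 0 < η)
    (hx : IsMinOn (fun u => f u + ‖u - w‖ ^ 2 / (2 * η)) Set.univ x) (u : E) :
    (1 / η - ν) / 2 * ‖x - u‖ ^ 2 ≤ f u - f w + ‖u - w‖ ^ 2 / (2 * η) + G ^ 2 * η / 2 := by
  have hgrow := hx.add_sq_norm_sub_le_of_convexOn hf u
  have hlipx := hlip w x
  rw [norm_sub_rev u] at hgrow
  rw [norm_sub_rev w] at hlipx
  linarith [mul_le_sq_div_add G ‖x - w‖ hη]

theorem average_sq_norm_sub_le_of_isMinOn {ι : Type*} [Fintype ι] [Nonempty ι]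
    {f : ι → E → ℝ} {x : ι → E} {G ν η : ℝ} {w : E}
    (hf : ∀ i, ConvexOn ℝ Set.univ fun u => f i u + ν / 2 * ‖u‖ ^ 2)
    (hlip : ∀ i u v, f i u - f i v ≤ G * ‖u - v‖) (hη : 0 < η)
    (hx : ∀ i, IsMinOn (fun u => f i u + ‖u - w‖ ^ 2 / (2 * η)) Set.univ (x i)) (u : E) :
    (1 / η - ν) / 2 * ((Fintype.card ι : ℝ)⁻¹ * ∑ i, ‖x i - u‖ ^ 2)
      ≤ (Fintype.card ι : ℝ)⁻¹ * ∑ i, f i u - (Fintype.card ι : ℝ)⁻¹ * ∑ i, f i w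
        + ‖u - w‖ ^ 2 / (2 * η) + G ^ 2 * η / 2 := by
  have hι : (Fintype.card ι : ℝ) ≠ 0 := by positivity
  calc (1 / η - ν) / 2 * ((Fintype.card ι : ℝ)⁻¹ * ∑ i, ‖x i - u‖ ^ 2)
      = (Fintype.card ι : ℝ)⁻¹ * ∑ i, (1 / η - ν) / 2 * ‖x i - u‖ ^ 2 := by
        rw [← mul_sum]; ring
    _ ≤ (Fintype.card ι : ℝ)⁻¹ *
          ∑ i, (f i u - f i w + (‖u - w‖ ^ 2 / (2 * η) + G ^ 2 * η / 2)) := by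
        gcongr with i
        linarith [(hx i).sq_norm_sub_le_of_convexOn_of_lipschitz (hf i) (hlip i) hη u]
    _ = _ := by
        rw [sum_add_distrib, sum_sub_distrib, sum_const, card_univ, nsmul_eq_mul]
        field_simp
        ring

end ProxGrowth

theorem descent_bound_of_growth_bounds {G ν ρ η A D X : ℝ} (hη : 0 < η) (hηρ : η ≤ ρ)
    (hνρ : 2 * ν < 1 / ρ) (hD : 0 ≤ D)
    (hloc : (1 / η - ν) / 2 * A ≤ X + D / (2 * η) + G ^ 2 * η / 2)
    (hglob : X + D / (2 * ρ) + (1 / ρ - ν) / 2 * D ≤ 0) :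
    A / (2 * ρ) ≤ D / (2 * ρ) - (((1 / ρ - ν) / ρ) / (1 / η + 1 / ρ - 2 * ν)) * D
      + (2 * G ^ 2 * η / ρ) / (1 / η + 1 / ρ - 2 * ν) := by
  have hρ : 0 < ρ := hη.trans_le hηρ
  have hrη : 1 / ρ ≤ 1 / η := one_div_le_one_div_of_le hη hηρ
  have hr0 : 0 < 1 / ρ := by positivity
  set a := 1 / η
  set r := 1 / ρ
  have ha : 0 < a - ν := by linarith
  have hβ : 0 < a + r - 2 * ν := by linarith
  have hcomb : (a - ν) * A ≤ (a - 2 * r + ν) * D + G ^ 2 * η := by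
    have hDη : D / (2 * η) = a * D / 2 := by simp only [a]; ring
    have hDρ : D / (2 * ρ) = r * D / 2 := by simp only [r]; ring
    linarith
  -- passing from `hcomb` loses exactly `2 (r - ν)² D + (3a - r - 2ν) G² η ≥ 0`
  have hkey : (a + r - 2 * ν) * A ≤ (a - r) * D + 4 * G ^ 2 * η := by
    refine le_of_mul_le_mul_left ?_ ha
    nlinarith [mul_le_mul_of_nonneg_left hcomb hβ.le, mul_nonneg hD (sq_nonneg (r - ν)),
      mul_nonneg (mul_nonneg (sq_nonneg G) hη.le) (by linarith : 0 ≤ 3 * a - r - 2 * ν)]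
  rw [← sub_nonneg]
  have hdiff : D / (2 * ρ) - (r - ν) / ρ / (a + r - 2 * ν) * D + 2 * G ^ 2 * η / ρ / (a + r - 2 * ν)
      - A / (2 * ρ) = ((a - r) * D + 4 * G ^ 2 * η - (a + r - 2 * ν) * A)
        / (2 * ρ * (a + r - 2 * ν)) := by
    field_simp
    ring
  rw [hdiff]
  exact div_nonneg (by linarith) (by positivity)

theorem fedprox_one_step_descent_nonsmooth_general
    (p M I : ℕ) (hI : 1 ≤ I) (hIM : I ≤ M)
    (G ν ρ η : ℝ)
    (hη0 : 0 < η) (hηρ : η ≤ ρ) (hρ : ρ < 1 / (2 * ν))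
    (R : Fin M → EuclideanSpace ℝ (Fin p) → ℝ)
    (hlip : ∀ m u u', |R m u - R m u'| ≤ G * ‖u - u'‖)
    (hwc : ∀ m, ConvexOn ℝ Set.univ (fun u => R m u + (ν / 2) * ‖u‖ ^ 2))
    (Rbar : EuclideanSpace ℝ (Fin p) → ℝ)
    (hRbar : ∀ u, Rbar u = (M : ℝ)⁻¹ * ∑ m, R m u)
    (Rρ : EuclideanSpace ℝ (Fin p) → ℝ)
    (hRρ : ∀ u, Rρ u = ⨅ v, Rbar v + ‖v - u‖ ^ 2 / (2 * ρ))
    (w : EuclideanSpace ℝ (Fin p))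
    (wm : Fin M → EuclideanSpace ℝ (Fin p))
    (hwm : ∀ m, IsMinOn (fun u => R m u + ‖u - w‖ ^ 2 / (2 * η)) Set.univ (wm m))
    (hatw : EuclideanSpace ℝ (Fin p))
    (hhatw : IsMinOn (fun u => Rbar u + ‖u - w‖ ^ 2 / (2 * ρ)) Set.univ hatw) :
    ((((Finset.univ : Finset (Fin M)).powersetCard I).card : ℝ)⁻¹ *
      ∑ s ∈ (Finset.univ : Finset (Fin M)).powersetCard I,
        Rρ ((I : ℝ)⁻¹ • ∑ ξ ∈ s, wm ξ))
      ≤ Rρ w - (((1 / ρ - ν) / ρ) / (1 / η + 1 / ρ - 2 * ν)) * ‖hatw - w‖ ^ 2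
        + (2 * G ^ 2 * η / ρ) / (1 / η + 1 / ρ - 2 * ν) := by
  have : Nonempty (Fin M) := ⟨⟨0, by omega⟩⟩
  have hρ0 : 0 < ρ := hη0.trans_le hηρ
  have hlip' : ∀ m u v, R m u - R m v ≤ G * ‖u - v‖ := fun m u v => le_of_abs_le (hlip m u v)
  obtain rfl : Rρ = moreauEnvelope Rbar ρ := funext hRρ
  obtain rfl : Rbar = fun u => (Fintype.card (Fin M) : ℝ)⁻¹ * ∑ m, R m u :=
    funext fun u => by rw [hRbar, Fintype.card_fin]
  have hexp := average_powersetCard_moreauEnvelope_le (average_sub_average_le hlip') hρ0 hI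
    (by rwa [Fintype.card_fin]) hatw wm
  have hloc := average_sq_norm_sub_le_of_isMinOn hwc hlip' hη0 hwm hatw
  have hglob := hhatw.add_sq_norm_sub_le_of_convexOn (convexOn_average_add_sq_norm hwc) w
  rw [sub_self, norm_zero, zero_pow two_ne_zero, zero_div, add_zero, norm_sub_rev w] at hglob
  rw [hhatw.moreauEnvelope_eq]
  linarith [descent_bound_of_growth_bounds hη0 hηρ (two_mul_lt_one_div_of_lt_one_div hρ0 hρ)
    (sq_nonneg ‖hatw - w‖) hloc (by linarith)]

/-- One-step descent bound for `FedProx` on the Moreau envelope (non-smooth,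
weakly convex case): with `G`-Lipschitz, `ν`-weakly convex local objectives,
`0 < η ≤ ρ < 1/(2ν)`, `w^(m)` the exact local proximal points, `w⁺` their average over a
uniformly random size-`I` subset, and `ŵ = prox_{ρR̄}(w)`,
`E[R̄_ρ(w⁺)] ≤ R̄_ρ(w) − (((1/ρ − ν)/ρ)/(1/η + 1/ρ − 2ν))‖ŵ − w‖²
+ (2G²η/ρ)/(1/η + 1/ρ − 2ν)`. -/
theorem fedprox_one_step_descent_nonsmooth
    (p M I : ℕ) (hI : 1 ≤ I) (hIM : I ≤ M)
    (G ν ρ η : ℝ) (hG : 0 ≤ G) (hν : 0 < ν)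
    (hη0 : 0 < η) (hηρ : η ≤ ρ) (hρ : ρ < 1 / (2 * ν))
    (R : Fin M → EuclideanSpace ℝ (Fin p) → ℝ)
    (hlip : ∀ m u u', |R m u - R m u'| ≤ G * ‖u - u'‖)
    (hwc : ∀ m, ConvexOn ℝ Set.univ (fun u => R m u + (ν / 2) * ‖u‖ ^ 2))
    (Rbar : EuclideanSpace ℝ (Fin p) → ℝ)
    (hRbar : ∀ u, Rbar u = (M : ℝ)⁻¹ * ∑ m, R m u)
    (Rρ : EuclideanSpace ℝ (Fin p) → ℝ)
    (hRρ : ∀ u, Rρ u = ⨅ v, Rbar v + ‖v - u‖ ^ 2 / (2 * ρ))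
    (w : EuclideanSpace ℝ (Fin p))
    (wm : Fin M → EuclideanSpace ℝ (Fin p))
    (hwm : ∀ m, IsMinOn (fun u => R m u + ‖u - w‖ ^ 2 / (2 * η)) Set.univ (wm m))
    (hwmuniq : ∀ m u,
      IsMinOn (fun v => R m v + ‖v - w‖ ^ 2 / (2 * η)) Set.univ u → u = wm m)
    (hatw : EuclideanSpace ℝ (Fin p))
    (hhatw : IsMinOn (fun u => Rbar u + ‖u - w‖ ^ 2 / (2 * ρ)) Set.univ hatw) :
    ((((Finset.univ : Finset (Fin M)).powersetCard I).card : ℝ)⁻¹ *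
      ∑ s ∈ (Finset.univ : Finset (Fin M)).powersetCard I,
        Rρ ((I : ℝ)⁻¹ • ∑ ξ ∈ s, wm ξ))
      ≤ Rρ w - (((1 / ρ - ν) / ρ) / (1 / η + 1 / ρ - 2 * ν)) * ‖hatw - w‖ ^ 2
        + (2 * G ^ 2 * η / ρ) / (1 / η + 1 / ρ - 2 * ν) :=
  fedprox_one_step_descent_nonsmooth_general p M I hI hIM G ν ρ η hη0 hηρ hρ R hlip hwc Rbar hRbar
    Rρ hRρ w wm hwm hatw hhatw
end
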